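/- arXiv:1712.04718 — 2 statements merged into one kernel-verified Lean document; each statement's English description precedes it below -/
import Mathlib

section
/- Let r_c, L, ε > 0 and Q ≥ 1, and let ξ_P > 0 and ξ_E > 0 satisfy the equations (Q r_c/(2L³))^{1/2} (ξ_P r_c)^{−2} e^{−r_c² ξ_P²} = ε and Q (r_c/(2L³))^{1/2} (ξ_E r_c)^{−2} e^{−r_c² ξ_E²} = ε, respectively. Then ξ_P ≤ ξ_E. -/
/-- With `Q ≥ 1`, the Ewald parameters `ξ_P` and `ξ_E` determined by
the Kolafa–Perram real-space truncation error estimates for the potential and the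
energy at the same tolerance `ε` satisfy `ξ_P ≤ ξ_E`. -/
theorem xi_potential_le_xi_energy (rc L ε Q : ℝ)
    (hrc : 0 < rc) (hL : 0 < L) (hε : 0 < ε) (hQ : 1 ≤ Q)
    (ξP ξE : ℝ) (hξP : 0 < ξP) (hξE : 0 < ξE)
    (heqP : (Q * rc / (2 * L ^ 3)) ^ ((1 : ℝ) / 2) * (ξP * rc) ^ (-2 : ℤ) *
      Real.exp (-(rc ^ 2) * ξP ^ 2) = ε)
    (heqE : Q * (rc / (2 * L ^ 3)) ^ ((1 : ℝ) / 2) * (ξE * rc) ^ (-2 : ℤ) *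
      Real.exp (-(rc ^ 2) * ξE ^ 2) = ε) :
    ξP ≤ ξE := by
  by_contra h
  push_neg at h
  set x : ℝ := rc / (2 * L ^ 3) with hx
  have hQ0 : 0 < Q := lt_of_lt_of_le one_pos hQ
  have hx0 : 0 < x := div_pos hrc (by positivity)
  -- coefficients
  have hCP : (Q * rc / (2 * L ^ 3)) ^ ((1 : ℝ) / 2) = Q ^ ((1:ℝ)/2) * x ^ ((1:ℝ)/2) := by
    rw [mul_div_assoc, Real.mul_rpow hQ0.le hx0.le]
  have hCPpos : 0 < (Q * rc / (2 * L ^ 3)) ^ ((1 : ℝ) / 2) :=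
    Real.rpow_pos_of_pos (by positivity) _
  have hCle : (Q * rc / (2 * L ^ 3)) ^ ((1 : ℝ) / 2) ≤ Q * x ^ ((1:ℝ)/2) := by
    rw [hCP]
    have : Q ^ ((1:ℝ)/2) ≤ Q := by
      calc Q ^ ((1:ℝ)/2) ≤ Q ^ (1:ℝ) := by
            apply Real.rpow_le_rpow_of_exponent_le hQ; norm_num
        _ = Q := Real.rpow_one Q
    exact mul_le_mul_of_nonneg_right this (Real.rpow_pos_of_pos hx0 _).le
  -- the decreasing factor
  have hf : (ξP * rc) ^ (-2 : ℤ) * Real.exp (-(rc ^ 2) * ξP ^ 2) <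
      (ξE * rc) ^ (-2 : ℤ) * Real.exp (-(rc ^ 2) * ξE ^ 2) := by
    have h1 : (ξP * rc) ^ (-2 : ℤ) < (ξE * rc) ^ (-2 : ℤ) := by
      rw [zpow_neg, zpow_neg]
      apply inv_strictAnti₀
      · positivity
      · have : ξE * rc < ξP * rc := by nlinarith
        have h2 : (0:ℝ) < ξE * rc := by positivity
        rw [zpow_two, zpow_two]
        nlinarith
    have h2 : Real.exp (-(rc ^ 2) * ξP ^ 2) < Real.exp (-(rc ^ 2) * ξE ^ 2) := by
      apply Real.exp_lt_exp.2
      nlinarith [mul_pos (pow_pos hrc 2) (mul_pos (sub_pos.2 h) (add_pos hξP hξE))]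
    have hp1 : (0:ℝ) < (ξP * rc) ^ (-2 : ℤ) := by positivity
    have hp2 : (0:ℝ) < Real.exp (-(rc ^ 2) * ξE ^ 2) := Real.exp_pos _
    nlinarith [Real.exp_pos (-(rc ^ 2) * ξP ^ 2)]
  have key : ε < ε := by
    calc ε = (Q * rc / (2 * L ^ 3)) ^ ((1 : ℝ) / 2) * (ξP * rc) ^ (-2 : ℤ) *
        Real.exp (-(rc ^ 2) * ξP ^ 2) := heqP.symm
      _ < (Q * rc / (2 * L ^ 3)) ^ ((1 : ℝ) / 2) * ((ξE * rc) ^ (-2 : ℤ) *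
        Real.exp (-(rc ^ 2) * ξE ^ 2)) := by
          rw [mul_assoc]
          exact mul_lt_mul_of_pos_left hf hCPpos
      _ ≤ Q * x ^ ((1:ℝ)/2) * ((ξE * rc) ^ (-2 : ℤ) *
        Real.exp (-(rc ^ 2) * ξE ^ 2)) := by
          apply mul_le_mul_of_nonneg_right hCle
          positivity
      _ = ε := by rw [← heqE]; ring
  exact absurd key (lt_irrefl ε)
end

section
/- The function E^L: ℝ³ → ℝ given by E^L(x) = (2π/L³) Σ_{k∈(2π/L)ℤ³, k≠0} (e^{−|k|²/(4ξ²)}/|k|²) | q_m e^{i k·x} + Σ_{ν≠m} q_ν e^{i k·x_ν} |² is differentiable at every x, and its gradient at x = x_m equals ∇E^L(x_m) = −(4π q_m/L³) Σ_{k∈(2π/L)ℤ³, k≠0} (e^{−|k|²/(4ξ²)}/|k|²) ( Σ_{ν=1}^N q_ν sin(k·(x_m − x_ν)) ) k. Consequently the Fourier-space Ewald force F^L(x_m) = −∇E^L(x_m) equals (4π q_m/L³) Σ_{k≠0} (e^{−|k|²/(4ξ²)}/|k|²) ( Σ_ν q_ν sin(k·(x_m − x_ν)) ) k. -/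
open scoped Real RealInnerProductSpace

noncomputable section

/-- `ℝ³` with the Euclidean structure. -/
abbrev V3 := EuclideanSpace ℝ (Fin 3)

/-- The integer vector `n ∈ ℤ³` as an element of `ℝ³`. -/
def intVec (n : Fin 3 → ℤ) : V3 := WithLp.toLp 2 (fun i => (n i : ℝ))

/-- The wavevector `k_n = (2π/L) n`. -/
def kvec (L : ℝ) (n : Fin 3 → ℤ) : V3 := (2 * π / L) • intVec n

/-- The Fourier-space Ewald energy as a function of the position `y` of particle
`m`, all other particles held fixed:
`E^L(y) = (2π/L³) Σ_{k≠0} (e^{−|k|²/(4ξ²)}/|k|²) |q_m e^{ik·y} + Σ_{ν≠m} q_ν e^{ik·x_ν}|²`. -/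
def Efourier (L ξ : ℝ) (N : ℕ) (q : Fin N → ℝ) (x : Fin N → V3) (m : Fin N)
    (y : V3) : ℝ :=
  (2 * π / L ^ 3) * ∑' n : {n : Fin 3 → ℤ // n ≠ 0},
    (Real.exp (-‖kvec L ↑n‖ ^ 2 / (4 * ξ ^ 2)) / ‖kvec L ↑n‖ ^ 2) *
      ‖(q m : ℂ) * Complex.exp (Complex.I * (⟪kvec L ↑n, y⟫ : ℝ)) +
        ∑ ν ∈ Finset.univ.erase m,
          (q ν : ℂ) * Complex.exp (Complex.I * (⟪kvec L ↑n, x ν⟫ : ℝ))‖ ^ 2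

/-! Write `S_k = Σ_{ν ≠ m} q_ν e^{i k·x_ν}` and `w_k = e^{-|k|²/(4ξ²)}/|k|²`. Each summand
`w_k |q_m e^{i k·y} + S_k|²` of `E^L` has gradient `-2 q_m w_k Im(e^{i k·y} conj S_k) k` in `y`,
and at `y = x_m` this imaginary part is `Σ_ν q_ν sin(k·(x_m - x_ν))`, the term `ν = m` being zero.
Since `|k| ≥ 2π/L` for `k ≠ 0`, both `w_k` and `w_k |k|` are dominated by a Gaussian in the lattice
point, which is summable over `ℤ³` as a product of one-dimensional Gaussian sums. Hence the
gradients of the summands are bounded, uniformly in `y`, by a summable sequence, and the series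
can be differentiated termwise. -/

theorem summable_fin_pi_prod {α : Type*} {f : α → ℝ} (hf : Summable f) (hf0 : 0 ≤ f) :
    ∀ d : ℕ, Summable fun n : Fin d → α => ∏ i, f (n i)
  | 0 => by simpa using Summable.of_finite
  | d + 1 => by
    have h := hf.mul_of_nonneg (summable_fin_pi_prod hf hf0 d) hf0
      fun n => Finset.prod_nonneg fun i _ => hf0 (n i)
    refine ((Fin.consEquiv fun _ => α).summable_iff).mp (h.congr fun p => ?_)
    simp [Fin.prod_univ_succ]

theorem summable_exp_neg_mul_int_sq {a : ℝ} (ha : 0 < a) :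
    Summable fun n : ℤ => Real.exp (-(a * n ^ 2)) := by
  refine (summable_pow_mul_jacobiTheta₂_term_bound 0 (div_pos ha Real.pi_pos) 0).congr fun n => ?_
  simp only [pow_zero, one_mul, mul_zero, zero_mul, sub_zero]
  congr 1
  field_simp

theorem hasDerivAt_norm_ofReal_mul_exp_add_sq (a : ℝ) (S : ℂ) (θ : ℝ) :
    HasDerivAt (fun θ : ℝ => ‖(a : ℂ) * Complex.exp (Complex.I * θ) + S‖ ^ 2)
      (-2 * a * (Complex.exp (Complex.I * θ) * (starRingEnd ℂ) S).im) θ := by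
  have hexp : HasDerivAt (fun θ : ℝ => (a : ℂ) * Complex.exp (Complex.I * θ) + S)
      ((a : ℂ) * (Complex.exp (Complex.I * θ) * Complex.I)) θ := by
    have := ((Complex.ofRealCLM.hasDerivAt (x := θ)).const_mul Complex.I).cexp
    simpa using (this.const_mul (a : ℂ)).add_const S
  convert hexp.norm_sq using 1
  rw [Complex.inner, mul_comm Complex.I]
  simp only [map_add, map_mul, Complex.conj_ofReal, Complex.mul_re, Complex.mul_im, Complex.add_re,
    Complex.add_im, Complex.conj_re, Complex.conj_im, Complex.ofReal_re, Complex.ofReal_im,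
    Complex.I_re, Complex.I_im, Complex.exp_ofReal_mul_I_re, Complex.exp_ofReal_mul_I_im]
  ring

theorem norm_ofReal_mul_exp_add_le (a : ℝ) (S : ℂ) (θ : ℝ) :
    ‖(a : ℂ) * Complex.exp (Complex.I * θ) + S‖ ≤ |a| + ‖S‖ := by
  refine (norm_add_le _ _).trans_eq ?_
  rw [norm_mul, Complex.norm_exp_I_mul_ofReal, mul_one, Complex.norm_real, Real.norm_eq_abs]

theorem abs_im_exp_mul_conj_le (θ : ℝ) (S : ℂ) :
    |(Complex.exp (Complex.I * θ) * (starRingEnd ℂ) S).im| ≤ ‖S‖ := by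
  refine (Complex.abs_im_le_norm _).trans_eq ?_
  rw [norm_mul, Complex.norm_exp_I_mul_ofReal, one_mul, Complex.norm_conj]

theorem im_exp_mul_conj_sum (s : ℝ) {ι : Type*} (T : Finset ι) (q t : ι → ℝ) :
    (Complex.exp (Complex.I * s) *
      (starRingEnd ℂ) (∑ ν ∈ T, (q ν : ℂ) * Complex.exp (Complex.I * (t ν : ℝ)))).im
      = ∑ ν ∈ T, q ν * Real.sin (s - t ν) := by
  simp only [map_sum, Finset.mul_sum, Complex.im_sum]
  refine Finset.sum_congr rfl fun ν _ => ?_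
  have hphase : Complex.exp (Complex.I * s) * (starRingEnd ℂ) (Complex.exp (Complex.I * (t ν : ℝ)))
      = Complex.exp (((s - t ν : ℝ) : ℂ) * Complex.I) := by
    rw [← Complex.exp_conj, ← Complex.exp_add]
    congr 1
    simp only [map_mul, Complex.conj_I, Complex.conj_ofReal, Complex.ofReal_sub]
    ring
  rw [map_mul, Complex.conj_ofReal, mul_left_comm, hphase, Complex.im_ofReal_mul,
    Complex.exp_ofReal_mul_I_im]

theorem norm_sum_ofReal_mul_exp_le {ι : Type*} (T : Finset ι) (q t : ι → ℝ) :
    ‖∑ ν ∈ T, (q ν : ℂ) * Complex.exp (Complex.I * (t ν : ℝ))‖ ≤ ∑ ν ∈ T, |q ν| :=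
  (norm_sum_le _ _).trans_eq <| Finset.sum_congr rfl fun ν _ => by
    rw [norm_mul, Complex.norm_exp_I_mul_ofReal, mul_one, Complex.norm_real, Real.norm_eq_abs]

section InnerProductSpace

variable {E : Type*} [NormedAddCommGroup E] [InnerProductSpace ℝ E]

theorem im_exp_inner_mul_conj_sum_erase {ι : Type*} [Fintype ι] [DecidableEq ι] (k : E)
    (q : ι → ℝ) (x : ι → E) (m : ι) :
    (Complex.exp (Complex.I * (⟪k, x m⟫ : ℝ)) * (starRingEnd ℂ)
      (∑ ν ∈ Finset.univ.erase m, (q ν : ℂ) * Complex.exp (Complex.I * (⟪k, x ν⟫ : ℝ)))).im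
      = ∑ ν, q ν * Real.sin ⟪k, x m - x ν⟫ := by
  rw [im_exp_mul_conj_sum, ← Finset.sum_erase_add _ _ (Finset.mem_univ m)]
  simp [inner_sub_right]

variable [CompleteSpace E]

theorem hasGradientAt_norm_ofReal_mul_exp_inner_add_sq (a : ℝ) (S : ℂ) (k y : E) :
    HasGradientAt (fun y => ‖(a : ℂ) * Complex.exp (Complex.I * (⟪k, y⟫ : ℝ)) + S‖ ^ 2)
      ((-2 * a * (Complex.exp (Complex.I * (⟪k, y⟫ : ℝ)) * (starRingEnd ℂ) S).im) • k) y := by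
  rw [hasGradientAt_iff_hasFDerivAt]
  have := (hasDerivAt_norm_ofReal_mul_exp_add_sq a S ⟪k, y⟫).comp_hasFDerivAt y
    (innerSL ℝ k).hasFDerivAt
  refine this.congr_fderiv (ContinuousLinearMap.ext fun v => ?_)
  simp

theorem hasGradientAt_tsum {ι : Type*} {f : ι → E → ℝ} {g : ι → E → E} {u : ι → ℝ}
    (hu : Summable u) (hf : ∀ n y, HasGradientAt (f n) (g n y) y) (hg : ∀ n y, ‖g n y‖ ≤ u n)
    {y₀ : E} (hf₀ : Summable fun n => f n y₀) (y : E) :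
    HasGradientAt (fun y => ∑' n, f n y) (∑' n, g n y) y := by
  rw [hasGradientAt_iff_hasFDerivAt, ← LinearIsometryEquiv.coe_toContinuousLinearEquiv,
    ContinuousLinearEquiv.map_tsum]
  exact hasFDerivAt_tsum hu (fun n y => hasGradientAt_iff_hasFDerivAt.mp (hf n y))
    (fun n y => ((InnerProductSpace.toDual ℝ E).norm_map _).trans_le (hg n y)) hf₀ y

theorem HasGradientAt.const_mul {f : E → ℝ} {g y : E} (h : HasGradientAt f g y) (c : ℝ) :
    HasGradientAt (fun y => c * f y) (c • g) y := by
  rw [hasGradientAt_iff_hasFDerivAt] at h ⊢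
  simpa using h.const_mul c

theorem hasGradientAt_tsum_mul_norm_ofReal_mul_exp_inner_add_sq {ι : Type*} {w : ι → ℝ}
    {k : ι → E} {S : ι → ℂ} {B : ℝ} (a : ℝ) (hw : ∀ n, 0 ≤ w n) (hS : ∀ n, ‖S n‖ ≤ B)
    (hw_sum : Summable w) (hwk_sum : Summable fun n => w n * ‖k n‖) (y : E) :
    HasGradientAt
      (fun y => ∑' n, w n * ‖(a : ℂ) * Complex.exp (Complex.I * (⟪k n, y⟫ : ℝ)) + S n‖ ^ 2)
      (∑' n, (w n * (-2 * a *
        (Complex.exp (Complex.I * (⟪k n, y⟫ : ℝ)) * (starRingEnd ℂ) (S n)).im)) • k n) y := by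
  have hterm : ∀ n y, HasGradientAt
      (fun y => w n * ‖(a : ℂ) * Complex.exp (Complex.I * (⟪k n, y⟫ : ℝ)) + S n‖ ^ 2)
      ((w n * (-2 * a *
        (Complex.exp (Complex.I * (⟪k n, y⟫ : ℝ)) * (starRingEnd ℂ) (S n)).im)) • k n) y :=
    fun n y => by
      simpa only [smul_smul] using
        (hasGradientAt_norm_ofReal_mul_exp_inner_add_sq a (S n) (k n) y).const_mul (w n)
  have hbound : ∀ n y, ‖(w n * (-2 * a *
      (Complex.exp (Complex.I * (⟪k n, y⟫ : ℝ)) * (starRingEnd ℂ) (S n)).im)) • k n‖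
      ≤ w n * ‖k n‖ * (2 * |a| * B) := fun n y => by
    have him := (abs_im_exp_mul_conj_le ⟪k n, y⟫ (S n)).trans (hS n)
    rw [norm_smul, Real.norm_eq_abs, abs_mul, abs_mul, abs_mul, abs_of_nonneg (hw n), abs_neg,
      abs_two, mul_right_comm]
    have hwn := hw n
    gcongr
  have hsum₀ : Summable fun n =>
      w n * ‖(a : ℂ) * Complex.exp (Complex.I * (⟪k n, (0 : E)⟫ : ℝ)) + S n‖ ^ 2 :=
    (hw_sum.mul_right ((|a| + B) ^ 2)).of_nonneg_of_le
      (fun n => mul_nonneg (hw n) (sq_nonneg _)) fun n =>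
        mul_le_mul_of_nonneg_left (pow_le_pow_left₀ (norm_nonneg _)
          ((norm_ofReal_mul_exp_add_le _ _ _).trans (by linarith [hS n])) 2) (hw n)
  exact hasGradientAt_tsum (hwk_sum.mul_right _) hterm hbound hsum₀ y

end InnerProductSpace

theorem norm_sq_intVec (n : Fin 3 → ℤ) : ‖intVec n‖ ^ 2 = ∑ i, (n i : ℝ) ^ 2 := by
  simp [EuclideanSpace.norm_sq_eq, intVec]

theorem summable_exp_neg_mul_norm_intVec_sq {a : ℝ} (ha : 0 < a) :
    Summable fun n : Fin 3 → ℤ => Real.exp (-(a * ‖intVec n‖ ^ 2)) := by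
  refine (summable_fin_pi_prod (summable_exp_neg_mul_int_sq ha) (fun _ => (Real.exp_pos _).le)
    3).congr fun n => ?_
  rw [norm_sq_intVec, Finset.mul_sum, ← Finset.sum_neg_distrib, Real.exp_sum]

theorem one_le_norm_intVec {n : Fin 3 → ℤ} (hn : n ≠ 0) : 1 ≤ ‖intVec n‖ := by
  obtain ⟨i, hi⟩ := Function.ne_iff.mp hn
  have h1 : (1 : ℝ) ≤ (n i : ℝ) ^ 2 := by
    rw [← sq_abs, ← Int.cast_abs]
    exact one_le_pow₀ (by exact_mod_cast Int.one_le_abs hi)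
  have h2 : (1 : ℝ) ≤ ‖intVec n‖ ^ 2 := by
    rw [norm_sq_intVec]
    exact h1.trans (Finset.single_le_sum (fun j _ => sq_nonneg (n j : ℝ)) (Finset.mem_univ i))
  exact one_le_sq_iff_one_le_abs _ |>.mp h2 |>.trans_eq (abs_norm _)

theorem norm_kvec (L : ℝ) (n : Fin 3 → ℤ) : ‖kvec L n‖ = |2 * π / L| * ‖intVec n‖ := by
  rw [kvec, norm_smul, Real.norm_eq_abs]

theorem two_pi_div_le_norm_kvec {L : ℝ} (hL : 0 < L) {n : Fin 3 → ℤ} (hn : n ≠ 0) :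
    2 * π / L ≤ ‖kvec L n‖ := by
  rw [norm_kvec, abs_of_pos (by positivity)]
  exact le_mul_of_one_le_right (by positivity) (one_le_norm_intVec hn)

theorem summable_exp_neg_norm_kvec_sq {L ξ : ℝ} (hL : L ≠ 0) (hξ : ξ ≠ 0) :
    Summable fun n : Fin 3 → ℤ => Real.exp (-‖kvec L n‖ ^ 2 / (4 * ξ ^ 2)) := by
  have ha : 0 < (2 * π / L) ^ 2 / (4 * ξ ^ 2) := by
    have : 2 * π / L ≠ 0 := div_ne_zero (by positivity) hL
    positivity
  refine (summable_exp_neg_mul_norm_intVec_sq ha).congr fun n => ?_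
  rw [norm_kvec, mul_pow, sq_abs]
  ring_nf

def ewaldWeight (ξ r : ℝ) : ℝ := Real.exp (-r ^ 2 / (4 * ξ ^ 2)) / r ^ 2

theorem ewaldWeight_nonneg (ξ r : ℝ) : 0 ≤ ewaldWeight ξ r := by
  unfold ewaldWeight; positivity

theorem ewaldWeight_le {ξ c r : ℝ} (hc : 0 < c) (hcr : c ≤ r) :
    ewaldWeight ξ r ≤ Real.exp (-r ^ 2 / (4 * ξ ^ 2)) / c ^ 2 :=
  div_le_div_of_nonneg_left (Real.exp_pos _).le (by positivity) (pow_le_pow_left₀ hc.le hcr 2)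

theorem ewaldWeight_mul_le {ξ c r : ℝ} (hc : 0 < c) (hcr : c ≤ r) :
    ewaldWeight ξ r * r ≤ Real.exp (-r ^ 2 / (4 * ξ ^ 2)) / c := by
  have hr : 0 < r := hc.trans_le hcr
  calc ewaldWeight ξ r * r = Real.exp (-r ^ 2 / (4 * ξ ^ 2)) / r := by
        unfold ewaldWeight; field_simp
    _ ≤ Real.exp (-r ^ 2 / (4 * ξ ^ 2)) / c :=
        div_le_div_of_nonneg_left (Real.exp_pos _).le hc hcr

theorem summable_ewaldWeight {L ξ : ℝ} (hL : 0 < L) (hξ : ξ ≠ 0) :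
    Summable fun n : {n : Fin 3 → ℤ // n ≠ 0} => ewaldWeight ξ ‖kvec L n‖ :=
  .of_nonneg_of_le (fun _ => ewaldWeight_nonneg _ _)
    (fun n => ewaldWeight_le (by positivity) (two_pi_div_le_norm_kvec hL n.2))
    (((summable_exp_neg_norm_kvec_sq hL.ne' hξ).comp_injective Subtype.val_injective).div_const _)

theorem summable_ewaldWeight_mul_norm {L ξ : ℝ} (hL : 0 < L) (hξ : ξ ≠ 0) :
    Summable fun n : {n : Fin 3 → ℤ // n ≠ 0} => ewaldWeight ξ ‖kvec L n‖ * ‖kvec L n‖ :=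
  .of_nonneg_of_le (fun _ => mul_nonneg (ewaldWeight_nonneg _ _) (norm_nonneg _))
    (fun n => ewaldWeight_mul_le (by positivity) (two_pi_div_le_norm_kvec hL n.2))
    (((summable_exp_neg_norm_kvec_sq hL.ne' hξ).comp_injective Subtype.val_injective).div_const _)

/-- The Fourier-space Ewald energy `E^L` is differentiable
everywhere, and its gradient at `x_m` is
`∇E^L(x_m) = −(4πq_m/L³) Σ_{k≠0} (e^{−|k|²/(4ξ²)}/|k|²)(Σ_ν q_ν sin(k·(x_m−x_ν))) k`;
consequently the Fourier-space Ewald force `F^L(x_m) = −∇E^L(x_m)` equals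
`(4πq_m/L³) Σ_{k≠0} (e^{−|k|²/(4ξ²)}/|k|²)(Σ_ν q_ν sin(k·(x_m−x_ν))) k`. -/
theorem Efourier_gradient (L ξ : ℝ) (hL : 0 < L) (hξ : 0 < ξ)
    (N : ℕ) (q : Fin N → ℝ) (x : Fin N → V3) (m : Fin N) :
    (∀ y : V3, DifferentiableAt ℝ (Efourier L ξ N q x m) y) ∧
    HasGradientAt (Efourier L ξ N q x m)
      (-((4 * π * q m / L ^ 3) •
        ∑' n : {n : Fin 3 → ℤ // n ≠ 0},
          ((Real.exp (-‖kvec L ↑n‖ ^ 2 / (4 * ξ ^ 2)) / ‖kvec L ↑n‖ ^ 2) *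
            ∑ ν, q ν * Real.sin (⟪kvec L ↑n, x m - x ν⟫ : ℝ)) • kvec L ↑n))
      (x m) := by
  have hgrad : ∀ y, HasGradientAt (Efourier L ξ N q x m) ((2 * π / L ^ 3) •
      ∑' n : {n : Fin 3 → ℤ // n ≠ 0}, (ewaldWeight ξ ‖kvec L n‖ * (-2 * q m *
        (Complex.exp (Complex.I * (⟪kvec L n, y⟫ : ℝ)) * (starRingEnd ℂ)
          (∑ ν ∈ Finset.univ.erase m,
            (q ν : ℂ) * Complex.exp (Complex.I * (⟪kvec L ↑n, x ν⟫ : ℝ)))).im)) • kvec L n) y :=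
    fun y => (hasGradientAt_tsum_mul_norm_ofReal_mul_exp_inner_add_sq (q m)
      (fun _ => ewaldWeight_nonneg _ _) (fun _ => norm_sum_ofReal_mul_exp_le _ _ _)
      (summable_ewaldWeight hL hξ.ne') (summable_ewaldWeight_mul_norm hL hξ.ne') y).const_mul _
  refine ⟨fun y => (hgrad y).differentiableAt, ?_⟩
  convert hgrad (x m) using 1
  rw [← neg_smul, show -(4 * π * q m / L ^ 3) = 2 * π / L ^ 3 * (-2 * q m) by ring, mul_smul,
    ← tsum_const_smul'']
  refine congrArg _ (tsum_congr fun n => ?_)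
  rw [smul_smul, im_exp_inner_mul_conj_sum_erase, ewaldWeight]
  ring_nf

end
end
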